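/- arXiv:2308.09964 — 9 statements merged into one kernel-verified Lean document; each statement's English description precedes it below -/
import Mathlib

section
/- Fix a buyer value b > 0 and let μ be a Borel probability measure on ℝ with μ((-∞,0)) = 0 (the conditional distribution of the seller's value given buyer value b). Suppose p ∈ [0, b] is a profit-maximizing take-it-or-leave-it offer, i.e. for every p' ∈ [0, b] one has μ((-∞,p'])·(b − p') ≤ μ((-∞,p])·(b − p). Then b·μ((-∞,b]) ≤ (e/(e−1))·( b·μ((-∞,p]) + ∫_{(p,b]} s dμ(s) ). -/
open MeasureTheory Set Real

private lemma xlog_le (x u : ℝ) (hx : 0 < x) (hu : 0 < u) :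
    x * Real.log (u / x) ≤ u / Real.exp 1 := by
  have he : (0:ℝ) < Real.exp 1 := Real.exp_pos 1
  have h1 : Real.log (u / (Real.exp 1 * x)) ≤ u / (Real.exp 1 * x) - 1 :=
    Real.log_le_sub_one_of_pos (div_pos hu (mul_pos he hx))
  have h2 : Real.log (u / x) = Real.log (u / (Real.exp 1 * x)) + 1 := by
    rw [Real.log_div hu.ne' hx.ne', Real.log_div hu.ne' (mul_pos he hx).ne',
      Real.log_mul he.ne' hx.ne', Real.log_exp]
    ring
  have h3 : Real.log (u / x) ≤ u / (Real.exp 1 * x) := by linarith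
  calc x * Real.log (u / x) ≤ x * (u / (Real.exp 1 * x)) :=
        mul_le_mul_of_nonneg_left h3 hx.le
    _ = u / Real.exp 1 := by field_simp

set_option maxHeartbeats 1000000 in
/-- The buyer-offering mechanism is an `e/(e-1)`-approximation to the optimal welfare,
per buyer value `b`: if `p ∈ [0,b]` maximizes the buyer's profit `(b - p')·μ((-∞,p'])`
over `p' ∈ [0,b]`, then the optimal welfare `b·μ((-∞,b])` is at most `e/(e-1)` times the
mechanism's welfare `b·μ((-∞,p]) + ∫_{(p,b]} s dμ`. -/
theorem buyer_offering_approx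
    (μ : Measure ℝ) [IsProbabilityMeasure μ]
    (hμ : μ (Set.Iio 0) = 0)
    (b : ℝ) (hb : 0 < b)
    (p : ℝ) (hp : p ∈ Set.Icc 0 b)
    (hmax : ∀ p' ∈ Set.Icc 0 b,
      (μ (Set.Iic p')).toReal * (b - p') ≤ (μ (Set.Iic p)).toReal * (b - p)) :
    b * (μ (Set.Iic b)).toReal ≤
      (Real.exp 1 / (Real.exp 1 - 1)) *
        (b * (μ (Set.Iic p)).toReal + ∫ s in Set.Ioc p b, s ∂μ) := by
  obtain ⟨hp0, hpb⟩ := hp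
  have he : (0:ℝ) < Real.exp 1 := Real.exp_pos 1
  have he2 : (2:ℝ) ≤ Real.exp 1 := by
    have := Real.add_one_le_exp (1:ℝ); linarith
  have he1 : (1:ℝ) < Real.exp 1 := by linarith
  set Fp := (μ (Set.Iic p)).toReal with hFpdef
  set Fb := (μ (Set.Iic b)).toReal with hFbdef
  have hFp0 : 0 ≤ Fp := ENNReal.toReal_nonneg
  have hFb0 : 0 ≤ Fb := ENNReal.toReal_nonneg
  have hFb1 : Fb ≤ 1 := by
    rw [hFbdef]
    have : μ (Set.Iic b) ≤ μ Set.univ := measure_mono (subset_univ _)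
    simpa using ENNReal.toReal_le_toReal (measure_ne_top _ _) (measure_ne_top _ _) |>.mpr this
  -- Ioc measure as difference of toReal CDFs
  have hIoc : ∀ x : ℝ, x ≤ b → (μ (Set.Ioc x b)).toReal = Fb - (μ (Set.Iic x)).toReal := by
    intro x hx
    have hsplit : Set.Iic x ∪ Set.Ioc x b = Set.Iic b := Set.Iic_union_Ioc_eq_Iic hx
    have hdisj : Disjoint (Set.Iic x) (Set.Ioc x b) := by
      apply Set.disjoint_left.mpr
      intro a ha ha'
      exact absurd ha' (by simp [Set.mem_Ioc]; intro h; exact absurd h (not_lt.mpr ha))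
    have := measure_union (μ := μ) hdisj measurableSet_Ioc
    rw [hsplit] at this
    rw [hFbdef, this, ENNReal.toReal_add (measure_ne_top _ _) (measure_ne_top _ _)]
    ring
  -- the case p = b or zero profit
  by_cases hprpos : 0 < Fp * (b - p)
  · -- main case
    have hpltb : p < b := by
      rcases lt_or_eq_of_le hpb with h | h
      · exact h
      · exfalso; rw [h] at hprpos; simp at hprpos
    have hFppos : 0 < Fp := by
      by_contra h
      push_neg at h
      have : Fp = 0 := le_antisymm h hFp0
      rw [this] at hprpos; simp at hprpos
    have hFpFb : Fp ≤ Fb := by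
      rw [hFpdef, hFbdef]
      exact ENNReal.toReal_le_toReal (measure_ne_top _ _) (measure_ne_top _ _) |>.mpr
        (measure_mono (Set.Iic_subset_Iic.mpr hpb))
    have hFbpos : 0 < Fb := lt_of_lt_of_le hFppos hFpFb
    set pr := Fp * (b - p) with hprdef
    set t0 := pr / Fb with ht0def
    set c := b - p - t0 with hcdef
    have ht0pos : 0 < t0 := div_pos hprpos hFbpos
    have ht0le : t0 ≤ b - p := by
      rw [ht0def, hprdef, div_le_iff₀ hFbpos]
      nlinarith
    have hc0 : 0 ≤ c := by rw [hcdef]; linarith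
    -- the layer-cake step
    set ν := μ.restrict (Set.Ioc p b) with hνdef
    have hν_fin : IsFiniteMeasure ν := by rw [hνdef]; infer_instance
    have hfmeas : Measurable (fun s : ℝ => s - p) := measurable_id.sub measurable_const
    have hbound : ∀ᵐ s ∂ν, ‖s - p‖ ≤ b - p := by
      rw [hνdef]
      refine (ae_restrict_iff' measurableSet_Ioc).mpr (Filter.Eventually.of_forall ?_)
      intro s hs
      rw [Real.norm_eq_abs, abs_of_nonneg (by linarith [hs.1] : (0:ℝ) ≤ s - p)]
      linarith [hs.2]
    have hf_int : Integrable (fun s : ℝ => s - p) ν :=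
      (integrable_const (b - p)).mono' hfmeas.aestronglyMeasurable hbound
    have hf_nn : 0 ≤ᵐ[ν] (fun s : ℝ => s - p) := by
      rw [hνdef]
      refine (ae_restrict_iff' measurableSet_Ioc).mpr (Filter.Eventually.of_forall ?_)
      intro s hs
      simp only [Pi.zero_apply]
      linarith [hs.1]
    have hlayer := hf_int.integral_eq_integral_meas_lt hf_nn
    -- rewrite the layer-cake integrand
    have hlayer2 : (∫ s, (s - p) ∂ν) =
        ∫ t in Set.Ioi 0, (μ (Set.Ioc (p + t) b)).toReal := by
      rw [hlayer]
      refine setIntegral_congr_fun measurableSet_Ioi (fun t ht => ?_)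
      have hset : {a : ℝ | t < a - p} = Set.Ioi (p + t) := by
        ext a; simp [Set.mem_Ioi]; constructor <;> intro h <;> linarith
      rw [hset, hνdef, measureReal_def, Measure.restrict_apply measurableSet_Ioi]
      have ht' : (0:ℝ) < t := ht
      have hset2 : Set.Ioi (p + t) ∩ Set.Ioc p b = Set.Ioc (p + t) b := by
        ext a
        simp only [Set.mem_inter_iff, Set.mem_Ioi, Set.mem_Ioc]
        constructor
        · rintro ⟨h1, _, h3⟩; exact ⟨h1, h3⟩
        · rintro ⟨h1, h2⟩; exact ⟨h1, by linarith, h2⟩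
      rw [hset2]
    -- measurability / integrability of the tail function
    set h : ℝ → ℝ := fun t => (μ (Set.Ioc (p + t) b)).toReal with hhdef
    have hanti : Antitone h := by
      intro t t' htt'
      exact ENNReal.toReal_le_toReal (measure_ne_top _ _) (measure_ne_top _ _) |>.mpr
        (measure_mono (Set.Ioc_subset_Ioc_left (by linarith)))
    have hhmeas : Measurable h := hanti.measurable
    have hh_nn : ∀ t, 0 ≤ h t := fun t => ENNReal.toReal_nonneg
    have hh_le_one : ∀ t, h t ≤ 1 := by
      intro t
      rw [hhdef]
      have : μ (Set.Ioc (p + t) b) ≤ μ Set.univ := measure_mono (subset_univ _)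
      simpa using ENNReal.toReal_le_toReal (measure_ne_top _ _) (measure_ne_top _ _) |>.mpr this
    have hh_zero : ∀ t, b - p < t → h t = 0 := by
      intro t ht
      rw [hhdef]
      have : Set.Ioc (p + t) b = ∅ := Set.Ioc_eq_empty (by intro hh; linarith [hh])
      simp [this]
    have hh_int : IntegrableOn h (Set.Ioi 0) := by
      refine Integrable.mono' (g := (Set.Ioc 0 (b-p)).indicator (fun _ => (1:ℝ))) ?_
        hhmeas.aestronglyMeasurable ?_
      · rw [integrable_indicator_iff measurableSet_Ioc]
        refine (integrableOn_const_iff (C := (1:ℝ))).mpr (Or.inr ?_)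
        exact lt_of_le_of_lt (Measure.restrict_apply_le _ _) measure_Ioc_lt_top
      · refine (ae_restrict_iff' measurableSet_Ioi).mpr (Filter.Eventually.of_forall ?_)
        intro t ht
        have ht' : (0:ℝ) < t := ht
        rw [Real.norm_eq_abs, abs_of_nonneg (hh_nn t)]
        by_cases hcase : t ∈ Set.Ioc 0 (b - p)
        · rw [Set.indicator_of_mem hcase]; exact hh_le_one t
        · rw [Set.indicator_of_notMem hcase]
          have h1 : b - p < t := by
            by_contra hcon; push_neg at hcon; exact hcase ⟨ht', hcon⟩
          exact le_of_eq (hh_zero t h1)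
    -- lower bound function g
    set g : ℝ → ℝ := fun t => Fb - pr * (b - p - t)⁻¹ with hgdef
    have hg_cont : ContinuousOn g (Set.Icc 0 c) := by
      refine continuousOn_const.sub (continuousOn_const.mul (ContinuousOn.inv₀ ?_ ?_))
      · exact (continuousOn_const.sub continuousOn_id)
      · intro t ht
        have := ht.2
        have : t ≤ c := this
        intro hzero
        rw [hcdef] at this
        nlinarith [ht0pos]
    have hg_intOn : IntegrableOn g (Set.Ioo 0 c) :=
      (hg_cont.integrableOn_Icc).mono_set Set.Ioo_subset_Icc_self
    have hg_le_h : ∀ t ∈ Set.Ioo 0 c, g t ≤ h t := by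
      intro t ht
      obtain ⟨ht1, ht2⟩ := ht
      have hptb : p + t < b := by rw [hcdef] at ht2; linarith [ht0pos]
      have hpt0 : 0 ≤ p + t := by linarith
      have hiocval : h t = Fb - (μ (Set.Iic (p + t))).toReal := hIoc (p + t) hptb.le
      have hmax' := hmax (p + t) ⟨hpt0, hptb.le⟩
      have hbpt : 0 < b - (p + t) := by linarith
      have hF_le : (μ (Set.Iic (p + t))).toReal ≤ pr / (b - p - t) := by
        rw [le_div_iff₀ (by linarith : (0:ℝ) < b - p - t)]
        calc (μ (Set.Iic (p + t))).toReal * (b - p - t)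
            = (μ (Set.Iic (p + t))).toReal * (b - (p + t)) := by ring_nf
          _ ≤ pr := hmax'
      rw [hgdef, hiocval]
      simp only
      have : pr * (b - p - t)⁻¹ = pr / (b - p - t) := by rw [div_eq_mul_inv]
      linarith [hF_le, this ▸ le_refl (pr * (b - p - t)⁻¹)]
    -- the integral lower bound
    have hstep1 : (∫ t in Set.Ioi 0, h t) ≥ ∫ t in Set.Ioo 0 c, g t := by
      have hind_int : Integrable ((Set.Ioo 0 c).indicator g) (volume.restrict (Set.Ioi 0)) := by
        refine Integrable.restrict ?_
        rw [integrable_indicator_iff measurableSet_Ioo]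
        exact hg_intOn
      have hle : ∀ t, (Set.Ioo 0 c).indicator g t ≤ h t := by
        intro t
        by_cases hcase : t ∈ Set.Ioo 0 c
        · rw [Set.indicator_of_mem hcase]; exact hg_le_h t hcase
        · rw [Set.indicator_of_notMem hcase]; exact hh_nn t
      calc ∫ t in Set.Ioo 0 c, g t
          = ∫ t in Set.Ioi 0, (Set.Ioo 0 c).indicator g t := by
            rw [setIntegral_indicator measurableSet_Ioo,
              Set.inter_eq_self_of_subset_right (fun t ht => ht.1)]
        _ ≤ ∫ t in Set.Ioi 0, h t := integral_mono hind_int hh_int (fun t => hle t)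
    -- compute the integral of g
    have hgval : (∫ t in Set.Ioo 0 c, g t) = Fb * c - pr * (Real.log (b - p) - Real.log t0) := by
      rw [← MeasureTheory.integral_Ioc_eq_integral_Ioo,
        ← intervalIntegral.integral_of_le hc0]
      have hint_inv : IntervalIntegrable (fun t : ℝ => (b - p - t)⁻¹) volume 0 c := by
        refine ContinuousOn.intervalIntegrable ?_
        rw [Set.uIcc_of_le hc0]
        refine ContinuousOn.inv₀ (continuousOn_const.sub continuousOn_id) ?_
        intro t ht
        have : t ≤ c := ht.2
        intro hzero
        rw [hcdef] at this
        nlinarith [ht0pos]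
      have hsplit2 : (∫ t in (0:ℝ)..c, g t)
          = (∫ t in (0:ℝ)..c, Fb) - ∫ t in (0:ℝ)..c, pr * (b - p - t)⁻¹ := by
        rw [hgdef, ← intervalIntegral.integral_sub intervalIntegrable_const
          (hint_inv.const_mul pr)]
      rw [hsplit2, intervalIntegral.integral_const, intervalIntegral.integral_const_mul]
      have hinv_comp : (∫ t in (0:ℝ)..c, (b - p - t)⁻¹)
          = Real.log (b - p) - Real.log t0 := by
        have := intervalIntegral.integral_comp_sub_left (fun x : ℝ => x⁻¹) (b - p)
          (a := 0) (b := c)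
        simp only [sub_zero] at this
        rw [show (fun t : ℝ => (b - p - t)⁻¹) = (fun t : ℝ => ((b-p) - t)⁻¹) from rfl]
        rw [this]
        have hbpc : b - p - c = t0 := by rw [hcdef]; ring
        rw [hbpc, integral_inv]
        · rw [Real.log_div (by linarith : (b:ℝ) - p ≠ 0) ht0pos.ne']
        · rw [Set.uIcc_of_le ht0le]
          intro hmem
          exact absurd hmem.1 (not_le.mpr ht0pos)
      rw [hinv_comp]
      simp [smul_eq_mul]
      ring
    -- decompose the welfare integral
    have hioc_meas : (μ (Set.Ioc p b)).toReal = Fb - Fp := hIoc p hpb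
    have hid_int : Integrable (fun s : ℝ => s) ν := by
      have : (fun s : ℝ => s) = (fun s : ℝ => (s - p) + p) := by funext s; ring
      rw [this]
      exact hf_int.add (integrable_const p)
    have hdecomp : (∫ s in Set.Ioc p b, s ∂μ)
        = (∫ s, (s - p) ∂ν) + p * (Fb - Fp) := by
      have h1 : (∫ s, s ∂ν) = ∫ s, ((s - p) + p) ∂ν := by congr 1; funext s; ring
      have h2 : (∫ s, ((s - p) + p) ∂ν) = (∫ s, (s - p) ∂ν) + ∫ _, p ∂ν :=
        integral_add hf_int (integrable_const p)
      have h3 : (∫ _, p ∂ν) = (ν Set.univ).toReal * p := by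
        rw [integral_const]; simp [smul_eq_mul, measureReal_def]
      have h4 : ν Set.univ = μ (Set.Ioc p b) := by
        rw [hνdef, Measure.restrict_apply_univ]
      rw [show (∫ s in Set.Ioc p b, s ∂μ) = ∫ s, s ∂ν from rfl, h1, h2, h3, h4, hioc_meas]
      ring
    -- put it all together
    have hkey : (∫ s in Set.Ioc p b, s ∂μ)
        ≥ p * (Fb - Fp) + Fb * c - pr * (Real.log (b - p) - Real.log t0) := by
      rw [hdecomp, hlayer2]
      have := le_trans (le_of_eq hgval.symm) hstep1
      linarith
    have hlog_bound : pr * (Real.log (b - p) - Real.log t0) ≤ b * Fb / Real.exp 1 := by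
      have hu : (0:ℝ) < (b - p) * Fb := mul_pos (by linarith) hFbpos
      have heq : Real.log (b - p) - Real.log t0 = Real.log ((b - p) * Fb / pr) := by
        rw [ht0def, Real.log_div ((by positivity : (0:ℝ) < (b-p)*Fb).ne') hprpos.ne',
          Real.log_div hprpos.ne' hFbpos.ne',
          Real.log_mul (by linarith : (b:ℝ) - p ≠ 0) hFbpos.ne']
        ring
      rw [heq]
      calc pr * Real.log ((b - p) * Fb / pr) ≤ (b - p) * Fb / Real.exp 1 :=
            xlog_le pr ((b - p) * Fb) hprpos hu
        _ ≤ b * Fb / Real.exp 1 := by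
            have hnum : (b - p) * Fb ≤ b * Fb := by nlinarith
            exact div_le_div_of_nonneg_right hnum he.le
    have hFbt0 : Fb * t0 = pr := by
      rw [ht0def, mul_comm, div_mul_cancel₀ pr hFbpos.ne']
    have hW : b * Fp + (∫ s in Set.Ioc p b, s ∂μ) ≥ b * Fb - b * Fb / Real.exp 1 := by
      have hc_expand : p * (Fb - Fp) + Fb * c = b * Fb - b * Fp - pr + (b - p) * Fp := by
        rw [hcdef]
        have : Fb * (b - p - t0) = Fb * (b - p) - pr := by rw [mul_sub, hFbt0]
        rw [this]; ring
      have hprval : (b - p) * Fp = pr := by rw [hprdef]; ring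
      linarith [hkey, hc_expand, hprval, hlog_bound]
    -- final arithmetic
    have hWnn : 0 ≤ b * Fp + ∫ s in Set.Ioc p b, s ∂μ := by
      have : (0:ℝ) ≤ b * Fb - b * Fb / Real.exp 1 := by
        rw [sub_nonneg, div_le_iff₀ he]
        nlinarith [mul_nonneg hb.le hFb0, he1]
      linarith [hW]
    rw [ge_iff_le, ← sub_le_iff_le_add'] at hW
    have hfinal : b * Fb * (Real.exp 1 - 1) ≤ Real.exp 1 * (b * Fp + ∫ s in Set.Ioc p b, s ∂μ) := by
      have := hW
      have h1 : b * Fb - b * Fb / Real.exp 1 ≤ b * Fp + ∫ s in Set.Ioc p b, s ∂μ := by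
        linarith [hW]
      have h2 : Real.exp 1 * (b * Fb / Real.exp 1) = b * Fb := by
        field_simp
      nlinarith [mul_le_mul_of_nonneg_left h1 he.le, h2]
    rw [div_mul_eq_mul_div, le_div_iff₀ (by linarith : (0:ℝ) < Real.exp 1 - 1)]
    nlinarith [hfinal]
  · -- degenerate case: profit is 0
    push_neg at hprpos
    have hpr0 : Fp * (b - p) = 0 :=
      le_antisymm hprpos (mul_nonneg hFp0 (sub_nonneg.mpr hpb))
    -- all CDF values strictly below b vanish
    have hzero : ∀ q : ℝ, q < b → μ (Set.Iic q) = 0 := by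
      intro q hq
      rcases lt_or_ge q 0 with hq0 | hq0
      · exact measure_mono_null (fun x hx => lt_of_le_of_lt hx hq0) hμ
      · have h1 := hmax q ⟨hq0, hq.le⟩
        rw [hpr0] at h1
        have h2 : (0:ℝ) < b - q := by linarith
        have h3 : (μ (Set.Iic q)).toReal = 0 := by
          have h4 : (0:ℝ) ≤ (μ (Set.Iic q)).toReal := ENNReal.toReal_nonneg
          nlinarith
        exact (ENNReal.toReal_eq_zero_iff _).mp h3 |>.resolve_right (measure_ne_top _ _)
    have hIio : μ (Set.Iio b) = 0 := by
      have hcover : Set.Iio b ⊆ ⋃ n : ℕ, Set.Iic (b - 1 / (n + 1)) := by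
        intro x hx
        obtain ⟨n, hn⟩ := exists_nat_one_div_lt (by have : x < b := hx; linarith : (0:ℝ) < b - x)
        exact Set.mem_iUnion.mpr ⟨n, by simp only [Set.mem_Iic]; linarith⟩
      refine le_antisymm ?_ zero_le
      calc μ (Set.Iio b) ≤ μ (⋃ n : ℕ, Set.Iic (b - 1 / (n + 1))) := measure_mono hcover
        _ ≤ ∑' n : ℕ, μ (Set.Iic (b - 1 / (n + 1))) := measure_iUnion_le _
        _ = 0 := by
            refine ENNReal.tsum_eq_zero.mpr (fun n => ?_)
            refine hzero _ ?_
            have : (0:ℝ) < 1 / ((n:ℝ) + 1) := by positivity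
            linarith
    -- on (p, b], μ-a.e. point equals b
    have hae : ∀ᵐ s ∂μ, s ∈ Set.Ioc p b → s = b := by
      rw [ae_iff]
      refine measure_mono_null (fun s hs => ?_) hIio
      simp only [Set.mem_setOf_eq, Classical.not_imp] at hs
      exact lt_of_le_of_ne hs.1.2 hs.2
    have hint_eq : (∫ s in Set.Ioc p b, s ∂μ) = (Fb - Fp) * b := by
      rw [setIntegral_congr_ae measurableSet_Ioc (hae.mono (fun s h hs => h hs)),
        setIntegral_const, measureReal_def, hIoc p hpb, smul_eq_mul]
    rw [hint_eq]
    have h3 : (1:ℝ) ≤ Real.exp 1 / (Real.exp 1 - 1) := by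
      rw [le_div_iff₀ (by linarith : (0:ℝ) < Real.exp 1 - 1)]
      linarith
    nlinarith [mul_nonneg hb.le hFb0, h3]
end

section
/- Let μ be a Borel probability measure on ℝ, b > 0, and p ∈ [0, b] such that for every p' ∈ [0, b], μ((-∞,p'])·(b − p') ≤ μ((-∞,p])·(b − p). Set q₁ = μ((-∞,p]) and q₂ = μ((-∞,b]), and assume q₁ > 0. Then ∫_{(p,b]} s dμ(s) ≥ q₁·(b − p)·ln(q₁/q₂) + b·(q₂ − q₁). -/
open MeasureTheory Set Real

/-- Lower bound on the expected seller value in `(p, b]` when `p` is a profit-maximizing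
take-it-or-leave-it offer: with `q₁ = μ((-∞,p])` and `q₂ = μ((-∞,b])`,
`∫_{(p,b]} s dμ ≥ q₁·(b−p)·ln(q₁/q₂) + b·(q₂−q₁)`. -/
theorem minimal_expectation
    (μ : Measure ℝ) [IsProbabilityMeasure μ]
    (b : ℝ) (hb : 0 < b)
    (p : ℝ) (hp : p ∈ Set.Icc 0 b)
    (hmax : ∀ p' ∈ Set.Icc 0 b,
      (μ (Set.Iic p')).toReal * (b - p') ≤ (μ (Set.Iic p)).toReal * (b - p))
    (q₁ q₂ : ℝ) (hq₁ : q₁ = (μ (Set.Iic p)).toReal) (hq₂ : q₂ = (μ (Set.Iic b)).toReal)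
    (hq₁pos : 0 < q₁) :
    q₁ * (b - p) * Real.log (q₁ / q₂) + b * (q₂ - q₁) ≤ ∫ s in Set.Ioc p b, s ∂μ := by
  obtain ⟨hp0, hpb⟩ := hp
  -- q₁ ≤ q₂
  have hq12 : q₁ ≤ q₂ := by
    rw [hq₁, hq₂]
    exact ENNReal.toReal_mono (measure_ne_top μ _) (measure_mono (Iic_subset_Iic.2 hpb))
  have hq2pos : 0 < q₂ := lt_of_lt_of_le hq₁pos hq12
  rcases eq_or_lt_of_le hpb with hpb' | hpb'
  · -- degenerate case p = b
    subst hpb'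
    have : q₁ = q₂ := by rw [hq₁, hq₂]
    simp [this, Set.Ioc_self]
  -- main case p < b
  set M : ℝ := b - p with hM
  have hMpos : 0 < M := by simp [hM]; linarith
  set u : ℝ := q₁ * M with hu
  have hupos : 0 < u := mul_pos hq₁pos hMpos
  set t₀ : ℝ := u / q₂ with ht₀
  have ht₀pos : 0 < t₀ := div_pos hupos hq2pos
  clear_value t₀ u M
  have ht₀M : t₀ ≤ M := by
    rw [ht₀, div_le_iff₀ hq2pos]
    calc u = q₁ * M := hu
    _ ≤ q₂ * M := by nlinarith
    _ = M * q₂ := mul_comm _ _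
  -- the measure of Ioc p b
  have hIocs : ∀ x : ℝ, p ≤ x → (μ (Set.Ioc p x)).toReal = (μ (Set.Iic x)).toReal - q₁ := by
    intro x hx
    have : Set.Ioc p x = Set.Iic x \ Set.Iic p := by ext y; simp [and_comm]
    rw [this, measure_diff (Iic_subset_Iic.2 hx) measurableSet_Iic.nullMeasurableSet
      (measure_ne_top μ _), ENNReal.toReal_sub_of_le (measure_mono (Iic_subset_Iic.2 hx))
      (measure_ne_top μ _), hq₁]
  have hIocb : (μ (Set.Ioc p b)).toReal = q₂ - q₁ := by rw [hIocs b hpb, hq₂]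
  -- integrability of (b - s) on Ioc p b
  have hid : Integrable (fun s : ℝ => s) (μ.restrict (Set.Ioc p b)) := by
    apply Integrable.mono' (integrable_const b) measurable_id.aestronglyMeasurable
    filter_upwards [ae_restrict_mem measurableSet_Ioc] with s hs
    simp only [id_eq]
    rw [Real.norm_eq_abs, abs_of_pos (by linarith [hs.1] : (0:ℝ) < s)]
    exact hs.2
  have hfint : Integrable (fun s : ℝ => b - s) (μ.restrict (Set.Ioc p b)) :=
    (integrable_const b).sub hid
  have hfnn : 0 ≤ᵐ[μ.restrict (Set.Ioc p b)] fun s : ℝ => b - s := by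
    filter_upwards [ae_restrict_mem measurableSet_Ioc] with s hs
    simp only [Pi.zero_apply]; linarith [hs.2]
  have hfbdd : (fun s : ℝ => b - s) ≤ᵐ[μ.restrict (Set.Ioc p b)] fun _ => M := by
    filter_upwards [ae_restrict_mem measurableSet_Ioc] with s hs
    simp only [hM]; linarith [hs.1]
  -- layer cake
  have hlayer : ∫ s in Set.Ioc p b, (b - s) ∂μ
      = ∫ t in Set.Ioc 0 M, ((μ.restrict (Set.Ioc p b)) {a : ℝ | t ≤ b - a}).toReal :=
    hfint.integral_eq_integral_Ioc_meas_le hfnn hfbdd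
  -- identify tail sets
  have htail : ∀ t ∈ Set.Ioc 0 M,
      ((μ.restrict (Set.Ioc p b)) {a : ℝ | t ≤ b - a}) = μ (Set.Ioc p (b - t)) := by
    intro t ht
    have hset : {a : ℝ | t ≤ b - a} = Set.Iic (b - t) := by
      ext a; simp only [Set.mem_setOf_eq, Set.mem_Iic]; constructor <;> intro <;> linarith
    rw [hset, Measure.restrict_apply' measurableSet_Ioc, Set.Iic_inter_Ioc_of_le (by linarith [ht.1])]
  -- pointwise bound on tail probabilities
  have hgbound : ∀ t ∈ Set.Ioc 0 M,
      (μ (Set.Ioc p (b - t))).toReal ≤ min q₂ (u / t) - q₁ := by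
    intro t ht
    have hbt0 : 0 ≤ b - t := by have := ht.2; simp [hM] at this; linarith
    have hpbt : p ≤ b - t := by have := ht.2; simp [hM] at this; linarith
    rw [hIocs _ hpbt]
    have h1 : (μ (Set.Iic (b - t))).toReal ≤ q₂ := by
      rw [hq₂]
      exact ENNReal.toReal_mono (measure_ne_top μ _) (measure_mono (Iic_subset_Iic.2 (by linarith [ht.1])))
    have h2 : (μ (Set.Iic (b - t))).toReal ≤ u / t := by
      have := hmax (b - t) ⟨hbt0, by linarith [ht.1]⟩
      rw [sub_sub_cancel] at this
      rw [le_div_iff₀ ht.1]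
      calc (μ (Set.Iic (b - t))).toReal * t ≤ (μ (Set.Iic p)).toReal * M := this
      _ = u := by rw [hu, hq₁]
    have := le_min h1 h2
    linarith
  -- the majorant
  set h : ℝ → ℝ := fun t => min q₂ (u / t) - q₁ with hh
  have hhmeas : Measurable h :=
    (measurable_const.min (measurable_const.div measurable_id)).sub measurable_const
  have hhint : IntegrableOn h (Set.Ioc 0 M) := by
    apply Integrable.mono' (integrable_const q₂) hhmeas.aestronglyMeasurable
    filter_upwards [ae_restrict_mem measurableSet_Ioc] with t ht
    have h1 : q₁ ≤ min q₂ (u / t) := by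
      apply le_min hq12
      rw [le_div_iff₀ ht.1, hu]
      nlinarith [ht.2, hq₁pos]
    have h2 : min q₂ (u / t) ≤ q₂ := min_le_left _ _
    rw [Real.norm_eq_abs, hh, abs_of_nonneg (by linarith)]
    linarith
  -- comparison
  have hcomp : ∫ t in Set.Ioc 0 M, ((μ.restrict (Set.Ioc p b)) {a : ℝ | t ≤ b - a}).toReal
      ≤ ∫ t in Set.Ioc 0 M, h t := by
    apply integral_mono_of_nonneg
    · filter_upwards with t; positivity
    · exact hhint
    · filter_upwards [ae_restrict_mem measurableSet_Ioc] with t ht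
      rw [htail t ht]
      exact hgbound t ht
  -- compute the integral of h
  have hsplit : ∫ t in Set.Ioc 0 M, h t
      = (∫ t in Set.Ioc 0 t₀, h t) + ∫ t in Set.Ioc t₀ M, h t := by
    rw [← Set.Ioc_union_Ioc_eq_Ioc ht₀pos.le ht₀M,
      setIntegral_union (Set.Ioc_disjoint_Ioc_of_le le_rfl) measurableSet_Ioc
      (hhint.mono_set (Set.Ioc_subset_Ioc_right ht₀M))
      (hhint.mono_set (Set.Ioc_subset_Ioc_left ht₀pos.le))]
  have hpiece1 : ∫ t in Set.Ioc 0 t₀, h t = (q₂ - q₁) * t₀ := by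
    rw [setIntegral_congr_fun measurableSet_Ioc (g := fun _ => q₂ - q₁) ?_]
    · rw [setIntegral_const, Real.volume_real_Ioc_of_le ht₀pos.le, smul_eq_mul, sub_zero,
        mul_comm]
    · intro t ht
      have : q₂ ≤ u / t := by
        rw [le_div_iff₀ ht.1]
        calc q₂ * t ≤ q₂ * t₀ := by nlinarith [ht.2, hq2pos]
        _ = u := by rw [ht₀]; field_simp
      simp [hh, min_eq_left this]
  have hpiece2 : ∫ t in Set.Ioc t₀ M, h t
      = u * (Real.log M - Real.log t₀) - q₁ * (M - t₀) := by
    rw [setIntegral_congr_fun measurableSet_Ioc (g := fun t => u * (1 / t) - q₁) ?_]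
    · rw [← intervalIntegral.integral_of_le ht₀M,
        intervalIntegral.integral_sub ((intervalIntegral.intervalIntegrable_one_div
          (fun x hx => by
            rcases Set.mem_uIcc.1 hx with h | h
            · linarith [h.1]
            · linarith [h.1, ht₀M]) (by fun_prop)).const_mul u)
          intervalIntegrable_const,
        intervalIntegral.integral_const_mul, integral_one_div (by
          intro hx
          rcases Set.mem_uIcc.1 hx with h | h
          · linarith [h.1]
          · linarith [h.1, ht₀M]),
        intervalIntegral.integral_const, Real.log_div (by linarith) (by linarith)]
      simp only [smul_eq_mul]; ring
    · intro t ht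
      have : u / t ≤ q₂ := by
        rw [div_le_iff₀ (by linarith [ht.1] : (0:ℝ) < t)]
        calc u = q₂ * t₀ := by rw [ht₀]; field_simp
        _ ≤ q₂ * t := by nlinarith [ht.1, hq2pos]
      show q₂ ⊓ (u / t) - q₁ = u * (1 / t) - q₁
      rw [min_eq_right this, mul_one_div]
  -- total bound for ∫ (b - s)
  have hlog : Real.log t₀ = Real.log q₁ + Real.log M - Real.log q₂ := by
    rw [ht₀, Real.log_div hupos.ne' hq2pos.ne', hu, Real.log_mul hq₁pos.ne' hMpos.ne']
  have htotal : ∫ s in Set.Ioc p b, (b - s) ∂μ ≤ u * (Real.log q₂ - Real.log q₁) := by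
    rw [hlayer]
    calc _ ≤ ∫ t in Set.Ioc 0 M, h t := hcomp
    _ = (q₂ - q₁) * t₀ + (u * (Real.log M - Real.log t₀) - q₁ * (M - t₀)) := by
        rw [hsplit, hpiece1, hpiece2]
    _ = u * (Real.log q₂ - Real.log q₁) := by
        have hq2t₀ : q₂ * t₀ = u := by rw [ht₀]; field_simp
        rw [hlog]; linear_combination hq2t₀ + hu
  -- assemble
  have hdecomp : ∫ s in Set.Ioc p b, s ∂μ
      = b * (q₂ - q₁) - ∫ s in Set.Ioc p b, (b - s) ∂μ := by
    have : ∫ s in Set.Ioc p b, (b - s) ∂μ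
        = (∫ s in Set.Ioc p b, (b : ℝ) ∂μ) - ∫ s in Set.Ioc p b, s ∂μ :=
      integral_sub (integrable_const b) hid
    rw [this, setIntegral_const, measureReal_def, hIocb, smul_eq_mul]
    ring
  rw [hdecomp]
  have hlogq : Real.log (q₁ / q₂) = Real.log q₁ - Real.log q₂ :=
    Real.log_div hq₁pos.ne' hq2pos.ne'
  rw [hlogq]
  have : q₁ * (b - p) = u := by rw [hu, hM]
  nlinarith [htotal]
end

section
/- For all real numbers b, p, q₁, q₂ with b > 0, 0 ≤ p ≤ b, and 0 < q₁ ≤ q₂, one has b·q₂ ≤ (e/(e−1))·( b·q₁ + q₁·(b − p)·ln(q₁/q₂) + b·(q₂ − q₁) ). -/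
open Real

lemma xlogx_ge (x : ℝ) (hx : 0 < x) : -(Real.exp 1)⁻¹ ≤ x * Real.log x := by
  have he := Real.exp_pos 1
  have h1 : Real.log ((Real.exp 1 * x)⁻¹) ≤ (Real.exp 1 * x)⁻¹ - 1 :=
    Real.log_le_sub_one_of_pos (by positivity)
  rw [Real.log_inv, Real.log_mul (ne_of_gt he) hx.ne', Real.log_exp] at h1
  have h2 : x * (Real.exp 1 * x)⁻¹ = (Real.exp 1)⁻¹ := by
    field_simp
  nlinarith [mul_le_mul_of_nonneg_left h1 hx.le]

/-- The concluding algebraic inequality of the `e/(e-1)` approximation proof: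
for `b > 0`, `0 ≤ p ≤ b` and `0 < q₁ ≤ q₂`,
`b·q₂ ≤ (e/(e−1))·( b·q₁ + q₁·(b − p)·ln(q₁/q₂) + b·(q₂ − q₁) )`. -/
theorem final_ratio_bound
    (b p q₁ q₂ : ℝ) (hb : 0 < b) (hp0 : 0 ≤ p) (hpb : p ≤ b)
    (hq₁ : 0 < q₁) (hq : q₁ ≤ q₂) :
    b * q₂ ≤ (Real.exp 1 / (Real.exp 1 - 1)) *
      (b * q₁ + q₁ * (b - p) * Real.log (q₁ / q₂) + b * (q₂ - q₁)) := by
  have he := Real.exp_pos 1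
  have he1 : 1 < Real.exp 1 := by
    have := Real.exp_one_gt_d9; linarith
  have hq₂ : 0 < q₂ := lt_of_lt_of_le hq₁ hq
  set L := Real.log (q₁ / q₂) with hLdef
  have hL : L ≤ 0 := Real.log_nonpos (by positivity) ((div_le_one hq₂).mpr hq)
  -- key: exp 1 * (q₁ * L) ≥ -q₂
  have hx0 : 0 < q₁ / q₂ := by positivity
  have hkey := xlogx_ge (q₁ / q₂) hx0
  have hx' : -q₂ ≤ Real.exp 1 * (q₁ * L) := by
    have h3 := mul_le_mul_of_nonneg_left hkey (by positivity : (0:ℝ) ≤ q₂ * Real.exp 1)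
    have h4 : q₂ * Real.exp 1 * (q₁ / q₂ * L) = Real.exp 1 * (q₁ * L) := by
      field_simp
    have h5 : q₂ * Real.exp 1 * -(Real.exp 1)⁻¹ = -q₂ := by
      field_simp
    linarith [h4 ▸ h5 ▸ h3]
  have h1 : Real.exp 1 * (q₁ * L) ≤ 0 :=
    mul_nonpos_of_nonneg_of_nonpos he.le (mul_nonpos_of_nonneg_of_nonpos hq₁.le hL)
  rw [div_mul_eq_mul_div, le_div_iff₀ (by linarith : (0:ℝ) < Real.exp 1 - 1)]
  nlinarith [mul_le_mul_of_nonneg_left hx' hb.le,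
    mul_nonpos_of_nonneg_of_nonpos hp0 h1]
end

section
/- Let μ be the measure on ℝ defined as μ = (1/e)·δ₀ + ν, where δ₀ is the Dirac measure at 0 and ν is the measure with density s ↦ 1/(e·(1−s)²) with respect to Lebesgue measure restricted to the interval (0, 1 − 1/e]. Then: (a) μ is a probability measure; (b) for every p ∈ [0, 1 − 1/e], (1 − p)·μ((-∞,p]) = 1/e; and (c) μ({0}) + ∫_ℝ s dμ(s) = 1 − 1/e. -/
open MeasureTheory Set Real
open scoped ENNReal NNReal

namespace TightAux

noncomputable def f (x : ℝ) : ℝ := 1 / (Real.exp 1 * (1 - x) ^ 2)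

lemma one_lt_e : (1:ℝ) < Real.exp 1 := by
  have := Real.exp_one_gt_d9; linarith

lemma inv_e_pos : (0:ℝ) < 1 / Real.exp 1 := by positivity

lemma inv_e_lt_one : 1 / Real.exp 1 < 1 := by
  rw [div_lt_one (Real.exp_pos 1)]; exact one_lt_e

lemma b_mem : (1 - 1 / Real.exp 1) ∈ Set.Icc (0:ℝ) (1 - 1 / Real.exp 1) :=
  ⟨by linarith [inv_e_lt_one], le_refl _⟩

lemma sub_pos_of_le {p x : ℝ} (hp : p ≤ 1 - 1 / Real.exp 1) (hx : x ≤ p) :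
    0 < 1 - x := by
  have := inv_e_pos; linarith

lemma contOn_f {p : ℝ} (hp : p ≤ 1 - 1 / Real.exp 1) :
    ContinuousOn f (Set.Icc 0 p) := by
  apply ContinuousOn.div continuousOn_const
  · fun_prop
  · intro x hx
    have h1 : 0 < 1 - x := sub_pos_of_le hp hx.2
    positivity

lemma contOn_xf {p : ℝ} (hp : p ≤ 1 - 1 / Real.exp 1) :
    ContinuousOn (fun x => x * f x) (Set.Icc 0 p) :=
  continuousOn_id.mul (contOn_f hp)

lemma int_f {p : ℝ} (hp : p ∈ Set.Icc (0:ℝ) (1 - 1 / Real.exp 1)) :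
    ∫ x in (0:ℝ)..p, f x = 1 / (Real.exp 1 * (1 - p)) - 1 / Real.exp 1 := by
  obtain ⟨hp0, hp1⟩ := hp
  have key : ∀ x ∈ Set.uIcc (0:ℝ) p,
      HasDerivAt (fun y => (Real.exp 1 * (1 - y))⁻¹) (f x) x := by
    intro x hx
    rw [Set.uIcc_of_le hp0] at hx
    have h1 : 0 < 1 - x := sub_pos_of_le hp1 hx.2
    have hne : Real.exp 1 * (1 - x) ≠ 0 := by positivity
    have hc : HasDerivAt (fun y => Real.exp 1 * (1 - y)) (-Real.exp 1) x := by
      simpa using ((hasDerivAt_id x).const_sub 1).const_mul (Real.exp 1)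
    have := hc.inv hne
    refine this.congr_deriv ?_
    rw [f]
    field_simp
  have hint : IntervalIntegrable f volume 0 p := by
    apply ContinuousOn.intervalIntegrable
    rw [Set.uIcc_of_le hp0]
    exact contOn_f hp1
  rw [intervalIntegral.integral_eq_sub_of_hasDerivAt key hint]
  have h1 : (0:ℝ) < 1 - p := sub_pos_of_le hp1 le_rfl
  have he := Real.exp_pos 1
  field_simp
  ring

lemma int_xf :
    ∫ x in (0:ℝ)..(1 - 1 / Real.exp 1), x * f x = 1 - 2 / Real.exp 1 := by
  have hp0 : (0:ℝ) ≤ 1 - 1 / Real.exp 1 := by linarith [inv_e_lt_one]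
  have key : ∀ x ∈ Set.uIcc (0:ℝ) (1 - 1 / Real.exp 1),
      HasDerivAt (fun y => ((1 - y)⁻¹ + Real.log (1 - y)) / Real.exp 1)
        (x * f x) x := by
    intro x hx
    rw [Set.uIcc_of_le hp0] at hx
    have h1 : 0 < 1 - x := sub_pos_of_le le_rfl hx.2
    have hne : (1 : ℝ) - x ≠ 0 := ne_of_gt h1
    have hc : HasDerivAt (fun y => (1:ℝ) - y) (-1) x := by
      simpa using (hasDerivAt_id x).const_sub 1
    have hinv := hc.inv hne
    have hlog := hc.log hne
    have := (hinv.add hlog).div_const (Real.exp 1)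
    refine this.congr_deriv ?_
    rw [f]
    have he := Real.exp_pos 1
    field_simp
    ring
  have hint : IntervalIntegrable (fun x => x * f x) volume 0 (1 - 1 / Real.exp 1) := by
    apply ContinuousOn.intervalIntegrable
    rw [Set.uIcc_of_le hp0]
    exact contOn_xf le_rfl
  rw [intervalIntegral.integral_eq_sub_of_hasDerivAt key hint]
  have he := Real.exp_pos 1
  have h1 : (1:ℝ) - (1 - 1 / Real.exp 1) = 1 / Real.exp 1 := by ring
  rw [h1]
  rw [one_div, Real.log_inv, Real.log_exp, inv_inv]
  field_simp
  ring
  simp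

lemma setint_f {p : ℝ} (hp : p ∈ Set.Icc (0:ℝ) (1 - 1 / Real.exp 1)) :
    ∫ x in Set.Ioc 0 p, f x = 1 / (Real.exp 1 * (1 - p)) - 1 / Real.exp 1 := by
  rw [← intervalIntegral.integral_of_le hp.1]
  exact int_f hp

lemma integrableOn_f {p : ℝ} (hp : p ∈ Set.Icc (0:ℝ) (1 - 1 / Real.exp 1)) :
    IntegrableOn f (Set.Ioc 0 p) volume :=
  ((contOn_f hp.2).integrableOn_Icc).mono_set Set.Ioc_subset_Icc_self

lemma lint_f {p : ℝ} (hp : p ∈ Set.Icc (0:ℝ) (1 - 1 / Real.exp 1)) :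
    ∫⁻ x in Set.Ioc 0 p, ENNReal.ofReal (f x) =
      ENNReal.ofReal (1 / (Real.exp 1 * (1 - p)) - 1 / Real.exp 1) := by
  rw [← ofReal_integral_eq_lintegral_ofReal (integrableOn_f hp)]
  · rw [setint_f hp]
  · filter_upwards [ae_restrict_mem measurableSet_Ioc] with x hx
    have h1 : 0 < 1 - x := sub_pos_of_le hp.2 hx.2
    rw [f]; positivity

end TightAux

open TightAux

/-- The tight instance for the buyer-offering mechanism: the equal-profit distribution
`μ = (1/e)·δ₀ + ν` where `ν` has density `1/(e·(1−s)²)` on `(0, 1 − 1/e]`.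
(a) `μ` is a probability measure; (b) every offer `p ∈ [0, 1 − 1/e]` yields buyer profit
exactly `1/e`; (c) the welfare `μ({0}) + ∫ s dμ` equals `1 − 1/e`. -/
theorem tight_instance_buyer_offering
    (μ : Measure ℝ)
    (hμ : μ = (ENNReal.ofReal (1 / Real.exp 1)) • Measure.dirac 0 +
      (volume.restrict (Set.Ioc 0 (1 - 1 / Real.exp 1))).withDensity
        (fun s => ENNReal.ofReal (1 / (Real.exp 1 * (1 - s) ^ 2)))) :
    IsProbabilityMeasure μ ∧
    (∀ p ∈ Set.Icc (0 : ℝ) (1 - 1 / Real.exp 1),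
      (1 - p) * (μ (Set.Iic p)).toReal = 1 / Real.exp 1) ∧
    (μ {0}).toReal + ∫ s, s ∂μ = 1 - 1 / Real.exp 1 := by
  have he := Real.exp_pos 1
  have hb0 : (0:ℝ) ≤ 1 - 1 / Real.exp 1 := by linarith [inv_e_lt_one]
  set b : ℝ := 1 - 1 / Real.exp 1 with hbdef
  set ν : Measure ℝ := (volume.restrict (Set.Ioc 0 b)).withDensity
      (fun s => ENNReal.ofReal (1 / (Real.exp 1 * (1 - s) ^ 2))) with hνdef
  have hdens : (fun s => ENNReal.ofReal (1 / (Real.exp 1 * (1 - s) ^ 2)))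
      = fun s => ENNReal.ofReal (f s) := rfl
  -- ν of measurable sets
  have hν_apply : ∀ A : Set ℝ, MeasurableSet A →
      ν A = ∫⁻ x in A ∩ Set.Ioc 0 b, ENNReal.ofReal (f x) := by
    intro A hA
    rw [hνdef, hdens, withDensity_apply _ hA, Measure.restrict_restrict hA]
  have hν_Iic : ∀ p ∈ Set.Icc (0:ℝ) b,
      ν (Set.Iic p) = ENNReal.ofReal (1 / (Real.exp 1 * (1 - p)) - 1 / Real.exp 1) := by
    intro p hp
    rw [hν_apply _ measurableSet_Iic]
    have : Set.Iic p ∩ Set.Ioc 0 b = Set.Ioc 0 p := by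
      ext x
      simp only [Set.mem_inter_iff, Set.mem_Iic, Set.mem_Ioc]
      constructor
      · rintro ⟨h1, h2, h3⟩; exact ⟨h2, h1⟩
      · rintro ⟨h1, h2⟩; exact ⟨h2, h1, le_trans h2 hp.2⟩
    rw [this]
    exact lint_f hp
  have hν_univ : ν Set.univ = ENNReal.ofReal (1 - 1 / Real.exp 1) := by
    rw [hν_apply _ MeasurableSet.univ, Set.univ_inter, lint_f b_mem]
    congr 1
    have h1 : (1:ℝ) - b = 1 / Real.exp 1 := by rw [hbdef]; ring
    rw [h1]
    field_simp
  have hν_zero : ν {0} = 0 := by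
    rw [hν_apply _ (measurableSet_singleton 0)]
    have : ({0} : Set ℝ) ∩ Set.Ioc 0 b = ∅ := by
      ext x; simp only [Set.mem_inter_iff, Set.mem_singleton_iff, Set.mem_Ioc,
        Set.mem_empty_iff_false, iff_false]
      rintro ⟨rfl, h, _⟩; exact lt_irrefl 0 h
    rw [this]
    simp
  -- part (a)
  have ha : IsProbabilityMeasure μ := by
    constructor
    rw [hμ]
    rw [Measure.add_apply, Measure.smul_apply, smul_eq_mul]
    rw [hν_univ]
    simp only [measure_univ, mul_one]
    rw [← ENNReal.ofReal_add (le_of_lt inv_e_pos) hb0]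
    rw [show (1 / Real.exp 1 + (1 - 1 / Real.exp 1)) = 1 by ring, ENNReal.ofReal_one]
  refine ⟨ha, ?_, ?_⟩
  -- part (b)
  · intro p hp
    have hμIic : μ (Set.Iic p) = ENNReal.ofReal (1 / (Real.exp 1 * (1 - p))) := by
      rw [hμ, Measure.add_apply, Measure.smul_apply, smul_eq_mul]
      rw [hν_Iic p hp]
      rw [Measure.dirac_apply]
      have h0 : (0:ℝ) ∈ Set.Iic p := hp.1
      rw [Set.indicator_of_mem h0]
      simp only [Pi.one_apply, mul_one]
      rw [← ENNReal.ofReal_add (le_of_lt inv_e_pos)]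
      · congr 1; ring
      · have h1 : 0 < 1 - p := sub_pos_of_le hp.2 le_rfl
        have hle : Real.exp 1 * (1 - p) ≤ Real.exp 1 := by nlinarith [hp.1]
        have h2 := one_div_le_one_div_of_le (by positivity : 0 < Real.exp 1 * (1 - p)) hle
        linarith
    rw [hμIic, ENNReal.toReal_ofReal (by
      have h1 : 0 < 1 - p := sub_pos_of_le hp.2 le_rfl
      positivity)]
    have h1 : 0 < 1 - p := sub_pos_of_le hp.2 le_rfl
    field_simp
  -- part (c)
  · have hμ0 : μ {0} = ENNReal.ofReal (1 / Real.exp 1) := by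
      rw [hμ, Measure.add_apply, Measure.smul_apply, smul_eq_mul]
      rw [hν_zero, Measure.dirac_apply]
      simp
    have hνint : ∫ s, s ∂ν = 1 - 2 / Real.exp 1 := by
      rw [hνdef, hdens]
      have hm : Measurable (fun s : ℝ => (f s).toNNReal) := by
        apply Measurable.real_toNNReal
        unfold f
        fun_prop
      have hdens2 : (fun s : ℝ => ENNReal.ofReal (f s))
          = fun s => ((f s).toNNReal : ℝ≥0∞) := rfl
      rw [hdens2, integral_withDensity_eq_integral_smul hm]
      have h : ∫ x in Set.Ioc 0 b, (f x).toNNReal • x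
          = ∫ x in Set.Ioc 0 b, x * f x := by
        apply setIntegral_congr_fun measurableSet_Ioc
        intro x hx
        have h1 : 0 < 1 - x := sub_pos_of_le le_rfl hx.2
        have hf0 : 0 ≤ f x := by rw [f]; positivity
        simp [NNReal.smul_def, Real.coe_toNNReal _ hf0, mul_comm]
      rw [h, ← intervalIntegral.integral_of_le hb0]
      exact int_xf
    have hνintegrable : Integrable (fun s : ℝ => s) ν := by
      rw [hνdef, hdens]
      rw [integrable_withDensity_iff]
      · apply Integrable.congr
          (f := fun x => x * f x)
        · exact ((contOn_xf le_rfl).integrableOn_Icc).mono_set Set.Ioc_subset_Icc_self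
        · filter_upwards [ae_restrict_mem measurableSet_Ioc] with x hx
          have h1 : 0 < 1 - x := sub_pos_of_le le_rfl hx.2
          have hf0 : 0 ≤ f x := by rw [f]; positivity
          rw [ENNReal.toReal_ofReal hf0]
      · apply Measurable.ennreal_ofReal
        unfold f
        fun_prop
      · exact Filter.Eventually.of_forall (fun x => ENNReal.ofReal_lt_top)
    have hdint : Integrable (fun s : ℝ => s)
        ((ENNReal.ofReal (1 / Real.exp 1)) • Measure.dirac (0:ℝ)) := by
      apply Integrable.smul_measure
      · apply Integrable.congr (integrable_const (0:ℝ))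
        rw [MeasureTheory.ae_dirac_eq 0]
        exact Filter.eventually_pure.2 rfl
      · exact ENNReal.ofReal_ne_top
    have hint : ∫ s, s ∂μ = 1 - 2 / Real.exp 1 := by
      rw [hμ, integral_add_measure hdint (by
        exact hνintegrable)]
      rw [hνint, integral_smul_measure, integral_dirac]
      simp
    rw [hμ0, hint, ENNReal.toReal_ofReal (le_of_lt inv_e_pos), hbdef]
    ring
end

section
/- Let k be an integer with k ≥ 2 and let ε be a real number with 0 < ε < 1. Define g : ℝ → ℝ by g(p) = p·( ((k+1)/(k+1+ε))·( 1/(k+ε) + ε/(1+ε) ) − (ε + 2k)/(2·(k+ε)²) + (ε + 2p)/(2·(p+ε)²) ). Then g is strictly increasing on the interval [1, k]. -/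
open Real

/-- The seller with value `0` strictly prefers higher offers: for an integer `k ≥ 2` and
`0 < ε < 1`, the function
`g(p) = p·( ((k+1)/(k+1+ε))·(1/(k+ε) + ε/(1+ε)) − (ε+2k)/(2(k+ε)²) + (ε+2p)/(2(p+ε)²) )`
is strictly increasing on `[1, k]`. -/
theorem seller_prefers_higher_prices (k : ℤ) (hk : 2 ≤ k) (ε : ℝ) (hε0 : 0 < ε) (hε1 : ε < 1) :
    StrictMonoOn
      (fun p : ℝ => p * (((k + 1) / (k + 1 + ε)) * (1 / (k + ε) + ε / (1 + ε))
        - (ε + 2 * k) / (2 * (k + ε) ^ 2) + (ε + 2 * p) / (2 * (p + ε) ^ 2)))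
      (Set.Icc (1 : ℝ) (k : ℝ)) := by
  have hκ : (2 : ℝ) ≤ (k : ℝ) := by exact_mod_cast hk
  set κ : ℝ := (k : ℝ) with hκdef
  set A : ℝ := ((κ + 1) / (κ + 1 + ε)) * (1 / (κ + ε) + ε / (1 + ε))
      - (ε + 2 * κ) / (2 * (κ + ε) ^ 2) with hAdef
  have hκε : 0 < κ + ε := by linarith
  have h1ε : 0 < 1 + ε := by linarith
  have hκ1ε : 0 < κ + 1 + ε := by linarith
  -- A is positive
  have hA : 0 < A := by
    have hCp : 0 < (κ + 1) * (2 * (κ + ε) * (1 + ε) + 2 * ε * (κ + ε) ^ 2)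
        - (ε + 2 * κ) * (κ + 1 + ε) * (1 + ε) := by
      have h2 : 0 < 1 + ε ^ 2 - κ + 3 * κ * ε + 2 * κ * ε ^ 2 + 2 * κ ^ 2 + 4 * κ ^ 2 * ε
          + 2 * κ ^ 3 := by nlinarith [sq_nonneg ε, mul_pos hε0 hε0]
      have heq : (κ + 1) * (2 * (κ + ε) * (1 + ε) + 2 * ε * (κ + ε) ^ 2)
          - (ε + 2 * κ) * (κ + 1 + ε) * (1 + ε)
          = ε * (1 + ε ^ 2 - κ + 3 * κ * ε + 2 * κ * ε ^ 2 + 2 * κ ^ 2 + 4 * κ ^ 2 * ε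
            + 2 * κ ^ 3) := by ring
      rw [heq]
      exact mul_pos hε0 h2
    have hM : (0 : ℝ) < 2 * (κ + 1 + ε) * (1 + ε) * (κ + ε) ^ 2 := by positivity
    have key : A * (2 * (κ + 1 + ε) * (1 + ε) * (κ + ε) ^ 2)
        = (κ + 1) * (2 * (κ + ε) * (1 + ε) + 2 * ε * (κ + ε) ^ 2)
          - (ε + 2 * κ) * (κ + 1 + ε) * (1 + ε) := by
      rw [hAdef]
      field_simp
    nlinarith
  apply strictMonoOn_of_deriv_pos (convex_Icc 1 κ)
  · -- continuity
    apply ContinuousOn.mul continuousOn_id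
    apply ContinuousOn.add (continuousOn_const)
    apply ContinuousOn.div (by fun_prop) (by fun_prop)
    intro p hp
    have hp1 : (1 : ℝ) ≤ p := hp.1
    have : 0 < p + ε := by linarith
    positivity
  · intro p hp
    rw [interior_Icc] at hp
    have hp1 : (1 : ℝ) < p := hp.1
    have hd : 0 < p + ε := by linarith
    have hdne : 2 * (p + ε) ^ 2 ≠ 0 := by positivity
    have hq : HasDerivAt (fun p : ℝ => (ε + 2 * p) / (2 * (p + ε) ^ 2))
        ((2 * (2 * (p + ε) ^ 2) - (ε + 2 * p) * (2 * (2 * (p + ε) ^ 1 * 1)))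
          / (2 * (p + ε) ^ 2) ^ 2) p := by
      have hu : HasDerivAt (fun p : ℝ => ε + 2 * p) 2 p := by
        simpa using ((hasDerivAt_id p).const_mul 2).const_add ε
      have hv : HasDerivAt (fun p : ℝ => 2 * (p + ε) ^ 2) (2 * (2 * (p + ε) ^ 1 * 1)) p := by
        exact (((hasDerivAt_id p).add_const ε).pow 2).const_mul 2
      exact hu.div hv hdne
    have hf : HasDerivAt (fun p : ℝ => p * (A + (ε + 2 * p) / (2 * (p + ε) ^ 2)))
        (1 * (A + (ε + 2 * p) / (2 * (p + ε) ^ 2))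
          + p * ((2 * (2 * (p + ε) ^ 2) - (ε + 2 * p) * (2 * (2 * (p + ε) ^ 1 * 1)))
            / (2 * (p + ε) ^ 2) ^ 2)) p := by
      exact (hasDerivAt_id p).mul (hq.const_add A)
    have hfeq : (fun p : ℝ => p * (((κ + 1) / (κ + 1 + ε)) * (1 / (κ + ε) + ε / (1 + ε))
        - (ε + 2 * κ) / (2 * (κ + ε) ^ 2) + (ε + 2 * p) / (2 * (p + ε) ^ 2)))
        = (fun p : ℝ => p * (A + (ε + 2 * p) / (2 * (p + ε) ^ 2))) := by
      funext q
      rw [hAdef]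
    rw [hfeq, hf.deriv]
    have hrest : 1 * (A + (ε + 2 * p) / (2 * (p + ε) ^ 2))
        + p * ((2 * (2 * (p + ε) ^ 2) - (ε + 2 * p) * (2 * (2 * (p + ε) ^ 1 * 1)))
          / (2 * (p + ε) ^ 2) ^ 2)
        = A + ε * (3 * p + ε) / (2 * (p + ε) ^ 3) := by
      field_simp
      ring
    rw [hrest]
    have h3 : 0 < ε * (3 * p + ε) / (2 * (p + ε) ^ 3) := by positivity
    exact add_pos hA h3
end

section
/- Let k be a natural number with k ≥ 2 and let p be a real number. Then ∑_{i=1}^{k} (1/k^{i}) · w_i ≤ 2 + (k − 2)/k, where w_i = k^{i} if k^{i−1} ≤ p ≤ k^{i} and w_i = k^{i−1} otherwise. -/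
/-- The expected welfare of a fixed-price mechanism with price `p` on the main support of
the dominant-strategy impossibility distribution: instance `(k^{i−1}, k^{i})` has
probability `1/k^{i}`, contributes `k^{i}` if trade occurs (`k^{i−1} ≤ p ≤ k^{i}`)
and `k^{i−1}` otherwise; the total is at most `2 + (k−2)/k`. -/
theorem fixed_price_welfare_bound (k : ℕ) (hk : 2 ≤ k) (p : ℝ) :
    ∑ i ∈ Finset.Icc 1 k, (1 / (k : ℝ) ^ i) *
      (if (k : ℝ) ^ (i - 1) ≤ p ∧ p ≤ (k : ℝ) ^ i then (k : ℝ) ^ i else (k : ℝ) ^ (i - 1))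
    ≤ 2 + ((k : ℝ) - 2) / k := by
  have hk0 : (0:ℝ) < (k:ℝ) := by
    have : (0:ℕ) < k := by omega
    exact_mod_cast this
  have hk1 : (1:ℝ) < (k:ℝ) := by
    have : (1:ℕ) < k := by omega
    exact_mod_cast this
  set c : ℕ → Prop := fun i => (k : ℝ) ^ (i - 1) ≤ p ∧ p ≤ (k : ℝ) ^ i with hc
  set S := (Finset.Icc 1 k).filter c with hS
  -- the trade set has at most two elements
  have hcard : S.card ≤ 2 := by
    rcases S.eq_empty_or_nonempty with h | h
    · simp [h]
    · set m := S.min' h with hm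
      have hmS : m ∈ S := S.min'_mem h
      have hsub : S ⊆ Finset.Icc m (m + 1) := by
        intro j hj
        have h1 : m ≤ j := S.min'_le j hj
        have hjm : (k:ℝ) ^ (j - 1) ≤ (k:ℝ) ^ m := by
          have hcj := (Finset.mem_filter.mp hj).2
          have hcm := (Finset.mem_filter.mp hmS).2
          exact le_trans hcj.1 hcm.2
        have h2 : j - 1 ≤ m := (pow_le_pow_iff_right₀ hk1).mp hjm
        simp only [Finset.mem_Icc]
        omega
      calc S.card ≤ (Finset.Icc m (m+1)).card := Finset.card_le_card hsub
        _ ≤ 2 := by rw [Nat.card_Icc]; omega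
  -- rewrite each term
  have hterm : ∀ i ∈ Finset.Icc 1 k,
      (1 / (k : ℝ) ^ i) *
        (if c i then (k : ℝ) ^ i else (k : ℝ) ^ (i - 1))
      = 1 / (k:ℝ) + (if c i then 1 - 1/(k:ℝ) else (0:ℝ)) := by
    intro i hi
    have hi1 : 1 ≤ i := (Finset.mem_Icc.mp hi).1
    have hpow : (0:ℝ) < (k:ℝ) ^ i := by positivity
    by_cases h : c i
    · rw [if_pos h, if_pos h]
      field_simp
      ring
    · rw [if_neg h, if_neg h]
      have : i - 1 + 1 = i := by omega
      rw [← this, pow_succ]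
      have hp1 : (0:ℝ) < (k:ℝ) ^ (i-1) := by positivity
      field_simp
      rw [Nat.add_sub_cancel]; ring
  rw [Finset.sum_congr rfl hterm, Finset.sum_add_distrib, Finset.sum_const,
    ← Finset.sum_filter, Finset.sum_const, ← hS]
  have hcardIcc : (Finset.Icc 1 k).card = k := by simp
  rw [hcardIcc]
  have h1 : k • (1 / (k:ℝ)) = 1 := by
    rw [nsmul_eq_mul]; field_simp
  rw [h1]
  have h2 : S.card • (1 - 1/(k:ℝ)) ≤ 2 * (1 - 1/(k:ℝ)) := by
    rw [nsmul_eq_mul]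
    apply mul_le_mul_of_nonneg_right
    · exact_mod_cast hcard
    · have : 1/(k:ℝ) ≤ 1 := by
        rw [div_le_one hk0]; linarith
      linarith
  have h3 : 1 + 2 * (1 - 1/(k:ℝ)) = 2 + ((k:ℝ) - 2)/k := by
    field_simp
    ring
  linarith
end

section
/- Let b₂, s₂, π₁, π₂, q₁, q₂ be reals with b₂ > s₂ > 1, π₁, π₂, q₁, q₂ > 0, π₁ + π₂ = 1, q₁ + q₂ = 1. If s₂ − π₁/π₂ > (q₂/q₁)·(b₂ − s₂) + 1, then there do not exist reals p₁, p₂, p₃ satisfying 0 ≤ p₁ ≤ 1, 0 ≤ p₂ ≤ b₂, s₂ ≤ p₃ ≤ b₂, the seller incentive constraint π₁·p₁ + π₂·p₂ ≥ π₂·p₃, and the buyer incentive constraint b₂ − q₁·p₂ − q₂·p₃ ≥ q₁·b₂ − q₁·p₁. -/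
/-- The welfare-maximizing allocation of the simple 2×2 distribution is not implementable:
under the parameter condition `s₂ − π₁/π₂ > (q₂/q₁)·(b₂ − s₂) + 1`, there are no
individually rational trade prices `p₁ = p(0,1)`, `p₂ = p(0,b₂)`, `p₃ = p(s₂,b₂)`
satisfying both the seller's and the buyer's Bayesian incentive constraints. -/
theorem opt_allocation_not_implementable
    (b₂ s₂ π₁ π₂ q₁ q₂ : ℝ)
    (hb : s₂ < b₂) (hs : 1 < s₂)
    (hπ₁ : 0 < π₁) (hπ₂ : 0 < π₂) (hq₁ : 0 < q₁) (hq₂ : 0 < q₂)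
    (hπ : π₁ + π₂ = 1) (hq : q₁ + q₂ = 1)
    (hcond : s₂ - π₁ / π₂ > (q₂ / q₁) * (b₂ - s₂) + 1) :
    ¬ ∃ p₁ p₂ p₃ : ℝ,
      0 ≤ p₁ ∧ p₁ ≤ 1 ∧ 0 ≤ p₂ ∧ p₂ ≤ b₂ ∧ s₂ ≤ p₃ ∧ p₃ ≤ b₂ ∧
      π₁ * p₁ + π₂ * p₂ ≥ π₂ * p₃ ∧
      b₂ - q₁ * p₂ - q₂ * p₃ ≥ q₁ * b₂ - q₁ * p₁ := by
  rintro ⟨p₁, p₂, p₃, h1, h2, h3, h4, h5, h6, hS, hB⟩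
  -- lower bound: π₂ * p₂ ≥ π₂ * s₂ - π₁
  have hlow : π₂ * (s₂ - π₁ / π₂) ≤ π₂ * p₂ := by
    have : π₂ * (s₂ - π₁ / π₂) = π₂ * s₂ - π₁ := by
      field_simp
    rw [this]
    nlinarith [mul_le_mul_of_nonneg_left h5 hπ₂.le]
  have hlow' : s₂ - π₁ / π₂ ≤ p₂ := le_of_mul_le_mul_left (by linarith [hlow]) hπ₂
  -- upper bound: q₁ * p₂ ≤ q₂*(b₂ - s₂) + q₁
  have hup : q₁ * p₂ ≤ q₁ * ((q₂ / q₁) * (b₂ - s₂) + 1) := by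
    have : q₁ * ((q₂ / q₁) * (b₂ - s₂) + 1) = q₂ * (b₂ - s₂) + q₁ := by
      field_simp
    rw [this]
    nlinarith [mul_le_mul_of_nonneg_left h5 hq₂.le]
  have hup' : p₂ ≤ (q₂ / q₁) * (b₂ - s₂) + 1 := le_of_mul_le_mul_left (by linarith [hup]) hq₁
  linarith
end

section
/- Let k ≥ 2 be a natural number and let π, q, b, s : {1,…,k} → ℝ satisfy π(i)·b(i) = π(k)·q(i+1)·(b(k) − s(i+1)) for every 1 ≤ i ≤ k−1. Define, for 1 ≤ t ≤ k, W(t) = ∑_{i=t}^{k−1} π(i)·b(i) + π(k)·(∑_{j=1}^{t} q(j))·b(k) + π(k)·∑_{j=t+1}^{k} q(j)·s(j). Then W(t) = W(t') for all 1 ≤ t, t' ≤ k. -/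
/-- All threshold allocation rules trading in exactly `k` instances of a standard L-shaped
distribution have the same expected welfare: if `π(i)·b(i) = π(k)·q(i+1)·(b(k) − s(i+1))`
for all `1 ≤ i ≤ k−1`, then the welfare
`W(t) = ∑_{i=t}^{k−1} π(i)·b(i) + π(k)·(∑_{j=1}^{t} q(j))·b(k) + π(k)·∑_{j=t+1}^{k} q(j)·s(j)`
is independent of the threshold `t ∈ {1,…,k}`. -/
theorem same_welfare_k_allocations
    (k : ℕ) (hk : 2 ≤ k) (pr q b s : ℕ → ℝ)
    (hcond : ∀ i, 1 ≤ i → i ≤ k - 1 →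
      pr i * b i = pr k * q (i + 1) * (b k - s (i + 1))) :
    ∀ t t', 1 ≤ t → t ≤ k → 1 ≤ t' → t' ≤ k →
      (∑ i ∈ Finset.Icc t (k - 1), pr i * b i)
        + pr k * (∑ j ∈ Finset.Icc 1 t, q j) * b k
        + pr k * (∑ j ∈ Finset.Icc (t + 1) k, q j * s j)
      = (∑ i ∈ Finset.Icc t' (k - 1), pr i * b i)
        + pr k * (∑ j ∈ Finset.Icc 1 t', q j) * b k
        + pr k * (∑ j ∈ Finset.Icc (t' + 1) k, q j * s j) := by
  set W : ℕ → ℝ := fun t =>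
    (∑ i ∈ Finset.Icc t (k - 1), pr i * b i)
      + pr k * (∑ j ∈ Finset.Icc 1 t, q j) * b k
      + pr k * (∑ j ∈ Finset.Icc (t + 1) k, q j * s j) with hW
  have step : ∀ t, 1 ≤ t → t + 1 ≤ k → W (t + 1) = W t := by
    intro t h1 h2
    have htk1 : t ≤ k - 1 := by omega
    have e1 : (∑ i ∈ Finset.Icc t (k - 1), pr i * b i)
        = pr t * b t + ∑ i ∈ Finset.Icc (t + 1) (k - 1), pr i * b i := by
      rw [Finset.Icc_eq_cons_Ioc htk1, Finset.sum_cons, ← Finset.Icc_add_one_left_eq_Ioc]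
    have e2 : (∑ j ∈ Finset.Icc 1 (t + 1), q j)
        = (∑ j ∈ Finset.Icc 1 t, q j) + q (t + 1) := by
      rw [Finset.sum_Icc_succ_top (by omega : 1 ≤ t + 1)]
    have e3 : (∑ j ∈ Finset.Icc (t + 1) k, q j * s j)
        = q (t + 1) * s (t + 1) + ∑ j ∈ Finset.Icc (t + 2) k, q j * s j := by
      rw [Finset.Icc_eq_cons_Ioc h2, Finset.sum_cons, ← Finset.Icc_add_one_left_eq_Ioc]; rfl
    simp only [hW]
    rw [e1, e2, e3]
    linear_combination -(hcond t h1 htk1)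
  have main : ∀ t, 1 ≤ t → t ≤ k → W t = W 1 := by
    intro t
    induction t with
    | zero => intro h; omega
    | succ n ih =>
      intro h1 h2
      rcases Nat.eq_zero_or_pos n with h0 | h0
      · subst h0; rfl
      · rw [step n h0 h2, ih h0 (by omega)]
  intro t t' h1 h2 h3 h4
  show W t = W t'
  rw [main t h1 h2, main t' h3 h4]
end

section
/- For all natural numbers k and i with k ≥ 2 and 1 ≤ i ≤ k − 1, one has ( k / (k − 1 + i) ) · ( 1 − (1/2)^{k−i+1} ) ≤ 1 − (1/2)^{k}. -/
/-- Verification of Condition 1 of the standard L-shaped form for the correlated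
distribution in the `1 + (ln 2)/2` impossibility: for `k ≥ 2` and `1 ≤ i ≤ k − 1`,
`(k/(k−1+i))·(1 − (1/2)^{k−i+1}) ≤ 1 − (1/2)^{k}`. -/
theorem L_shaped_condition_inequality (k i : ℕ) (hk : 2 ≤ k) (hi1 : 1 ≤ i) (hik : i ≤ k - 1) :
    ((k : ℝ) / ((k : ℝ) - 1 + (i : ℝ))) * (1 - (1 / 2 : ℝ) ^ (k - i + 1))
      ≤ 1 - (1 / 2 : ℝ) ^ k := by
  obtain ⟨j, rfl⟩ : ∃ j, i = j + 1 := ⟨i - 1, by omega⟩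
  obtain ⟨n, rfl⟩ : ∃ n, k = j + 1 + (n + 1) := ⟨k - j - 2, by omega⟩
  have hsub : j + 1 + (n + 1) - (j + 1) + 1 = n + 2 := by omega
  rw [hsub]
  set a : ℝ := (1 / 2 : ℝ) ^ (n + 2) with ha
  set b : ℝ := (1 / 2 : ℝ) ^ j with hb
  have hab : (1 / 2 : ℝ) ^ (j + 1 + (n + 1)) = a * b := by
    rw [ha, hb, ← pow_add]; ring_nf
  rw [hab]
  have ha0 : 0 < a := by positivity
  have ha1 : a ≤ 1 := pow_le_one₀ (by norm_num) (by norm_num)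
  have hb0 : 0 < b := by positivity
  have hb1 : b ≤ 1 := pow_le_one₀ (by norm_num) (by norm_num)
  have hj : (0 : ℝ) ≤ (j : ℝ) := Nat.cast_nonneg j
  have hD : (0 : ℝ) < ((j : ℝ) + 1 + ((n : ℝ) + 1)) - 1 + ((j : ℝ) + 1) := by
    have : (0 : ℝ) ≤ (n : ℝ) := Nat.cast_nonneg n
    linarith
  have hDcast : ((↑(j + 1 + (n + 1)) : ℝ) - 1 + (↑(j + 1) : ℝ)) > 0 := by push_cast; push_cast at hD; linarith
  rw [div_mul_eq_mul_div, div_le_iff₀ hDcast]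
  push_cast
  nlinarith [mul_nonneg (mul_nonneg hj ha0.le) (sub_nonneg.mpr hb1),
    mul_nonneg (mul_nonneg (Nat.cast_nonneg n : (0:ℝ) ≤ n) ha0.le) (sub_nonneg.mpr hb1),
    mul_nonneg ha0.le (sub_nonneg.mpr hb1),
    mul_nonneg hj (sub_nonneg.mpr (mul_le_one₀ ha1 hb0.le hb1))]
end
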